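/- In a multiplicity-free semi-simple tensor system over a commutative ring R, for any L-tuple λ̃ = (λ_1,…,λ_L), any ν_1, ν_2, ν_3 ∈ I, any 2 ≤ i ≤ L−1, and any μ, μ''' ∈ B_{λ̃}, the triple product of projection operators has matrix elements ⟨μ'''| p_i^{(ν_3)} p_{i-1}^{(ν_2)} p_i^{(ν_1)} |μ⟩ = Σ_{υ∈I} (Π_{j≠i-1,i} δ_{μ_j}^{μ_j'''}) (F̄^{λ_{i-1}λ_iλ_{i+1}}_{υ})^{ν_1}_{ν_2} (F^{λ_{i-1}λ_iλ_{i+1}}_{υ})^{ν_2}_{ν_3} (F̄^{μ_{i-1}'''λ_iλ_{i+1}}_{μ_{i+1}})^{ν_3}_{μ_i'''} (F^{μ_{i-1}λ_iλ_{i+1}}_{μ_{i+1}})^{μ_i}_{ν_1} (F^{μ_{i-2}λ_{i-1}ν_1}_{μ_{i+1}})^{μ_{i-1}}_{υ} (F̄^{μ_{i-2}λ_{i-1}ν_3}_{μ_{i+1}})^{υ}_{μ_{i-1}'''}. -/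

import Mathlib

open scoped Classical

open Fin.NatCast

noncomputable section

/-- A multiplicity-free semi-simple tensor system over a commutative ring `R`,
with index set `I`, fusion constants `N`, and F-moves `F`, `Fbar`.
`F a b c d e f` denotes `(F^{abc}_d)^e_f` and `Fbar a b c d f e` denotes `(F̄^{abc}_d)^f_e`. -/
structure TensorSystem (R : Type*) [CommRing R] (I : Type*) where
  N : I → I → I → ℕ
  F : I → I → I → I → I → I → R
  Fbar : I → I → I → I → I → I → R
  N_le_one : ∀ a b c, N a b c ≤ 1
  N_assoc : ∀ a b c d, (∑ᶠ e, N a b e * N e c d) = ∑ᶠ e, N a e d * N b c e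
  N_finite : ∀ a b, (Function.support fun c => N a b c).Finite
  F_vanish : ∀ a b c d e f, N a b e * N b c f * N a f d * N e c d = 0 → F a b c d e f = 0
  Fbar_vanish : ∀ a b c d e f, N a b e * N b c f * N a f d * N e c d = 0 → Fbar a b c d f e = 0
  pentagon : ∀ a b c d e f g k l,
      (∑ᶠ h, F a b c g f h * F a h d e g k * F b c d k h l) = F f c d e g l * F a b l e f k
  F_Fbar : ∀ a b c d e e',
      (∑ᶠ f, F a b c d e f * Fbar a b c d f e')
        = (if e = e' then (1 : R) else 0) * (N a b e : R) * (N e c d : R)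
  Fbar_F : ∀ a b c d f f',
      (∑ᶠ e, Fbar a b c d f' e * F a b c d e f)
        = (if f = f' then (1 : R) else 0) * (N b c f : R) * (N a f d : R)

namespace TensorSystem

variable {R : Type*} [CommRing R] {I : Type*}

/-- `μ = (μ₀, μ₁, …, μ_L)` is a fusion path for the tuple `λ̃ = (lam 1, …, lam L)`:
`μ₀ ∈ I0` and `N_{μ_{i-1} λ_i}^{μ_i} = 1` for `1 ≤ i ≤ L`. -/
def IsPath (TS : TensorSystem R I) (L : ℕ) (I0 : Set I) (lam : ℕ → I)
    (μ : Fin (L + 1) → I) : Prop :=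
  μ 0 ∈ I0 ∧ ∀ i : ℕ, 1 ≤ i → i ≤ L →
    TS.N (μ ((i - 1 : ℕ) : Fin (L + 1))) (lam i) (μ ((i : ℕ) : Fin (L + 1))) = 1

/-- Matrix element `⟨μ'| p_i^{(ν)} |μ⟩` of the two-site projection operator. -/
def pMat (TS : TensorSystem R I) (L : ℕ) (lam : ℕ → I) (i : ℕ) (ν : I)
    (μ' μ : Fin (L + 1) → I) : R :=
  (∏ j ∈ Finset.univ.erase ((i : ℕ) : Fin (L + 1)), if μ j = μ' j then (1 : R) else 0)
    * TS.Fbar (μ ((i - 1 : ℕ) : Fin (L + 1))) (lam i) (lam (i + 1))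
        (μ ((i + 1 : ℕ) : Fin (L + 1))) ν (μ' ((i : ℕ) : Fin (L + 1)))
    * TS.F (μ ((i - 1 : ℕ) : Fin (L + 1))) (lam i) (lam (i + 1))
        (μ ((i + 1 : ℕ) : Fin (L + 1))) (μ ((i : ℕ) : Fin (L + 1))) ν

/-- Matrix elements of the composition of two operators on `H_{λ̃}`,
summing over the fusion-path basis. -/
def mulMat (TS : TensorSystem R I) (L : ℕ) (I0 : Set I) (lam : ℕ → I)
    (A B : (Fin (L + 1) → I) → (Fin (L + 1) → I) → R)
    (μ' μ : Fin (L + 1) → I) : R :=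
  ∑ᶠ μ'' ∈ {x : Fin (L + 1) → I | TS.IsPath L I0 lam x}, A μ' μ'' * B μ'' μ

/-- Two operators on `H_{λ̃}` are equal iff all their matrix elements between
fusion-path basis vectors agree. -/
def MatEqOn (TS : TensorSystem R I) (L : ℕ) (I0 : Set I) (lam : ℕ → I)
    (A B : (Fin (L + 1) → I) → (Fin (L + 1) → I) → R) : Prop :=
  ∀ μ' μ : Fin (L + 1) → I, TS.IsPath L I0 lam μ' → TS.IsPath L I0 lam μ → A μ' μ = B μ' μ

/-- Extended fusion numbers `N_{a a₁ ⋯ aₙ}^b` along a list `[a₁, …, aₙ]`. -/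
def Nseq (TS : TensorSystem R I) : I → List I → I → ℕ
  | a, [], b => if a = b then 1 else 0
  | a, c :: rest, b => ∑ᶠ x, TS.N a c x * Nseq TS x rest b

/-- `ν` acts one-dimensionally on the left of `μ`. -/
def ActsOneDimLeft (TS : TensorSystem R I) (ν μ : I) : Prop :=
  (∑ᶠ μ' : I, TS.N ν μ μ') = 1

/-- `ν` acts one-dimensionally on the right of `μ`. -/
def ActsOneDimRight (TS : TensorSystem R I) (ν μ : I) : Prop :=
  (∑ᶠ μ' : I, TS.N μ ν μ') = 1

end TensorSystem

/-- Matrix elements of the identity operator. -/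
def deltaMat {R : Type*} [CommRing R] {I : Type*} (L : ℕ)
    (μ' μ : Fin (L + 1) → I) : R :=
  ∏ j : Fin (L + 1), if μ j = μ' j then (1 : R) else 0

/-- Scalar multiple of a matrix of operator matrix elements. -/
def smulMat {R : Type*} [CommRing R] {α : Sort*} (c : R) (A : α → α → R) : α → α → R :=
  fun x y => c * A x y

/-!
Each `p_i` changes only the label at site `i`, so the two sums over intermediate paths collapse to
sums over the label at site `i`, and `p_{i-1}` forces the two summation labels to agree. What is
left is an identity between F-moves alone (`finsum_Fbar_Fbar_F_F_eq_finsum_Fbar_F_F_Fbar`). It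
comes from the pentagon equation: solving it for two or three of its factors with the inversion
relations gives `∑_g F̄^{fcd}_e F^{abc}_g F^{ahd}_e = F^{abl}_e F̄^{bcd}_k` and
`∑_g F̄^{ahd}_e F̄^{abc}_g F^{f'cd}_e = F̄^{abl'}_e F^{bcd}_k`; the product of the two, summed over
`k`, is the identity once `F^{ahd}_e F̄^{ahd}_e = 1` is contracted.
-/

theorem finsum_mem_eq_finsum_update {α β M : Type*} [DecidableEq α] [AddCommMonoid M]
    {S : Set (α → β)} {φ : (α → β) → M} (t : α) (base : α → β)
    (h_eq : ∀ ρ, φ ρ ≠ 0 → ∀ j ≠ t, ρ j = base j)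
    (h_mem : ∀ x, φ (Function.update base t x) ≠ 0 → Function.update base t x ∈ S) :
    ∑ᶠ ρ ∈ S, φ ρ = ∑ᶠ x, φ (Function.update base t x) := by
  rw [← finsum_mem_range (Function.update_injective base t)]
  refine finsum_mem_inter_support_eq φ S _ (Set.ext fun ρ => ⟨?_, ?_⟩)
  · rintro ⟨-, hρ⟩
    refine ⟨⟨ρ t, funext fun j => ?_⟩, hρ⟩
    by_cases hj : j = t
    · subst hj
      simp
    · simp [Function.update_of_ne hj, h_eq ρ hρ j hj]
  · rintro ⟨⟨x, rfl⟩, hρ⟩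
    exact ⟨h_mem x hρ, hρ⟩

theorem Fin.natCast_ne_natCast {L j k : ℕ} (hj : j ≤ L) (hk : k ≤ L) (hjk : j ≠ k) :
    (j : Fin (L + 1)) ≠ k := fun h => hjk <| by
  simpa [Fin.val_cast_of_lt (Nat.lt_succ_of_le hj), Fin.val_cast_of_lt (Nat.lt_succ_of_le hk)]
    using congrArg Fin.val h

namespace TensorSystem

variable {R : Type*} [CommRing R] {I : Type*} (TS : TensorSystem R I)

def channels (a b : I) : Finset I := (TS.N_finite a b).toFinset

variable {TS} {a b c d e f g h k l : I}

theorem mem_channels : c ∈ TS.channels a b ↔ TS.N a b c ≠ 0 :=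
  Set.Finite.mem_toFinset _

theorem N_eq_one_of_ne_zero (h : TS.N a b c ≠ 0) : TS.N a b c = 1 := by
  have := TS.N_le_one a b c
  omega

theorem N_eq_one_of_F_ne_zero (hF : TS.F a b c d e f ≠ 0) :
    TS.N a b e = 1 ∧ TS.N b c f = 1 ∧ TS.N a f d = 1 ∧ TS.N e c d = 1 := by
  have h := mt (TS.F_vanish a b c d e f) hF
  simp only [mul_eq_zero, not_or] at h
  obtain ⟨⟨⟨h₁, h₂⟩, h₃⟩, h₄⟩ := h
  exact ⟨N_eq_one_of_ne_zero h₁, N_eq_one_of_ne_zero h₂, N_eq_one_of_ne_zero h₃,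
    N_eq_one_of_ne_zero h₄⟩

theorem N_eq_one_of_Fbar_ne_zero (hF : TS.Fbar a b c d f e ≠ 0) :
    TS.N a b e = 1 ∧ TS.N b c f = 1 ∧ TS.N a f d = 1 ∧ TS.N e c d = 1 := by
  have h := mt (TS.Fbar_vanish a b c d e f) hF
  simp only [mul_eq_zero, not_or] at h
  obtain ⟨⟨⟨h₁, h₂⟩, h₃⟩, h₄⟩ := h
  exact ⟨N_eq_one_of_ne_zero h₁, N_eq_one_of_ne_zero h₂, N_eq_one_of_ne_zero h₃,
    N_eq_one_of_ne_zero h₄⟩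

theorem finsum_eq_sum_channels {φ : I → R} (hφ : ∀ x, φ x ≠ 0 → TS.N a b x = 1) :
    ∑ᶠ x, φ x = ∑ x ∈ TS.channels a b, φ x :=
  finsum_eq_sum_of_support_subset φ fun x hx => mem_channels.mpr (by simp [hφ x hx])

theorem hasFiniteSupport_of_N_eq_one {φ : I → R} (hφ : ∀ x, φ x ≠ 0 → TS.N a b x = 1) :
    Function.HasFiniteSupport φ :=
  (TS.N_finite a b).subset fun x hx => by simp [hφ x hx]

theorem sum_channels_mul_delta {X : I → R} {n : I → ℕ}
    (hX : ∀ x, X x ≠ 0 → TS.N a b x = 1 ∧ n x = 1) (y : I) :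
    ∑ x ∈ TS.channels a b, X x * ((if x = y then 1 else 0) * (TS.N a b x : R) * (n x : R))
      = X y := by
  by_cases hXy : X y = 0
  · refine (Finset.sum_eq_zero fun x _ => ?_).trans hXy.symm
    by_cases hxy : x = y <;> simp [hxy, hXy]
  · obtain ⟨h₁, h₂⟩ := hX y hXy
    rw [Finset.sum_eq_single_of_mem y (mem_channels.mpr (by simp [h₁])) fun x _ hxy => by
      simp [hxy]]
    simp [h₁, h₂]

/-- In matrix form: `Y = X F` implies `Y F̄ = X`. Here `F F̄` is only the projector onto
admissible fusion channels, which is why `X` must be supported on them. -/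
theorem finsum_mul_Fbar_of_eq_finsum_mul_F {X Y : I → R}
    (hX : ∀ x, X x ≠ 0 → TS.N a b x = 1 ∧ TS.N x c d = 1)
    (hY : ∀ l, Y l = ∑ᶠ x, X x * TS.F a b c d x l) (y : I) :
    ∑ᶠ l, Y l * TS.Fbar a b c d l y = X y := by
  have hF : ∀ x, ∑ l ∈ TS.channels b c, TS.F a b c d x l * TS.Fbar a b c d l y
      = (if x = y then 1 else 0) * (TS.N a b x : R) * (TS.N x c d : R) := fun x => by
    rw [← TS.F_Fbar, finsum_eq_sum_channels fun l hl =>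
      (N_eq_one_of_F_ne_zero (left_ne_zero_of_mul hl)).2.1]
  calc ∑ᶠ l, Y l * TS.Fbar a b c d l y
      = ∑ l ∈ TS.channels b c, ∑ x ∈ TS.channels a b,
          X x * (TS.F a b c d x l * TS.Fbar a b c d l y) := by
        rw [finsum_eq_sum_channels fun l hl =>
          (N_eq_one_of_Fbar_ne_zero (right_ne_zero_of_mul hl)).2.1]
        refine Finset.sum_congr rfl fun l _ => ?_
        rw [hY, finsum_eq_sum_channels fun x hx => (hX x (left_ne_zero_of_mul hx)).1,
          Finset.sum_mul]
        simp only [mul_assoc]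
    _ = X y := by
        rw [Finset.sum_comm]
        simp only [← Finset.mul_sum, hF]
        exact sum_channels_mul_delta hX y

/-- In matrix form: `X = F Z` implies `F̄ X = Z`. -/
theorem finsum_Fbar_mul_of_eq_finsum_F_mul {X Z : I → R}
    (hZ : ∀ x, Z x ≠ 0 → TS.N b c x = 1 ∧ TS.N a x d = 1)
    (hX : ∀ x, X x = ∑ᶠ l, TS.F a b c d x l * Z l) (y : I) :
    ∑ᶠ x, TS.Fbar a b c d y x * X x = Z y := by
  have hF : ∀ l, ∑ x ∈ TS.channels a b, TS.Fbar a b c d y x * TS.F a b c d x l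
      = (if l = y then 1 else 0) * (TS.N b c l : R) * (TS.N a l d : R) := fun l => by
    rw [← TS.Fbar_F, finsum_eq_sum_channels fun x hx =>
      (N_eq_one_of_Fbar_ne_zero (left_ne_zero_of_mul hx)).1]
  calc ∑ᶠ x, TS.Fbar a b c d y x * X x
      = ∑ x ∈ TS.channels a b, ∑ l ∈ TS.channels b c,
          Z l * (TS.Fbar a b c d y x * TS.F a b c d x l) := by
        rw [finsum_eq_sum_channels fun x hx =>
          (N_eq_one_of_Fbar_ne_zero (left_ne_zero_of_mul hx)).1]
        refine Finset.sum_congr rfl fun x _ => ?_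
        rw [hX, finsum_eq_sum_channels fun l hl => (hZ l (right_ne_zero_of_mul hl)).1,
          Finset.mul_sum]
        exact Finset.sum_congr rfl fun l _ => by ring
    _ = Z y := by
        rw [Finset.sum_comm]
        simp only [← Finset.mul_sum, hF]
        exact sum_channels_mul_delta hZ y

theorem finsum_mul_F_mul_finsum_Fbar_mul {X W : I → R}
    (hX : ∀ x, X x ≠ 0 → TS.N a b x = 1 ∧ TS.N x c d = 1) :
    ∑ᶠ k, (∑ᶠ x, X x * TS.F a b c d x k) * ∑ᶠ x, TS.Fbar a b c d k x * W x
      = ∑ᶠ x, X x * W x := by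
  set Y : I → R := fun k => ∑ᶠ x, X x * TS.F a b c d x k
  have hYFbar : ∀ x, ∑ k ∈ TS.channels b c, Y k * TS.Fbar a b c d k x = X x := fun x => by
    rw [← finsum_eq_sum_channels fun k hk =>
      (N_eq_one_of_Fbar_ne_zero (right_ne_zero_of_mul hk)).2.1]
    exact finsum_mul_Fbar_of_eq_finsum_mul_F hX (fun _ => rfl) x
  have hFbarW : ∀ k, ∑ᶠ x, TS.Fbar a b c d k x * W x
      = ∑ x ∈ TS.channels a b, TS.Fbar a b c d k x * W x := fun k =>
    finsum_eq_sum_channels fun x hx => (N_eq_one_of_Fbar_ne_zero (left_ne_zero_of_mul hx)).1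
  calc ∑ᶠ k, Y k * ∑ᶠ x, TS.Fbar a b c d k x * W x
      = ∑ k ∈ TS.channels b c, Y k * ∑ x ∈ TS.channels a b, TS.Fbar a b c d k x * W x := by
        simp only [hFbarW]
        refine finsum_eq_sum_channels fun k hk => ?_
        obtain ⟨x, -, hx⟩ := Finset.exists_ne_zero_of_sum_ne_zero (right_ne_zero_of_mul hk)
        exact (N_eq_one_of_Fbar_ne_zero (left_ne_zero_of_mul hx)).2.1
    _ = ∑ x ∈ TS.channels a b,
          (∑ k ∈ TS.channels b c, Y k * TS.Fbar a b c d k x) * W x := by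
        simp only [Finset.mul_sum, Finset.sum_mul, mul_assoc]
        exact Finset.sum_comm
    _ = ∑ᶠ x, X x * W x := by
        simp only [hYFbar]
        exact (finsum_eq_sum_channels fun x hx => (hX x (left_ne_zero_of_mul hx)).1).symm

theorem F_mul_F_eq_finsum_F_mul_F_mul_Fbar :
    TS.F a b c g f h * TS.F a h d e g k
      = ∑ᶠ l, TS.F f c d e g l * TS.F a b l e f k * TS.Fbar b c d k l h :=
  (finsum_mul_Fbar_of_eq_finsum_mul_F (X := fun h => TS.F a b c g f h * TS.F a h d e g k)
    (fun _ hx => ⟨(N_eq_one_of_F_ne_zero (left_ne_zero_of_mul hx)).2.1,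
      (N_eq_one_of_F_ne_zero (right_ne_zero_of_mul hx)).2.1⟩)
    (fun l => (TS.pentagon a b c d e f g k l).symm) h).symm

theorem F_mul_F_eq_finsum_Fbar_mul_F_mul_F :
    TS.F a h d e g k * TS.F b c d k h l
      = ∑ᶠ f, TS.Fbar a b c g h f * (TS.F f c d e g l * TS.F a b l e f k) :=
  (finsum_Fbar_mul_of_eq_finsum_F_mul (X := fun f => TS.F f c d e g l * TS.F a b l e f k)
    (Z := fun h => TS.F a h d e g k * TS.F b c d k h l)
    (fun _ hx => ⟨(N_eq_one_of_F_ne_zero (right_ne_zero_of_mul hx)).1,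
      (N_eq_one_of_F_ne_zero (left_ne_zero_of_mul hx)).1⟩)
    (fun f => by rw [← TS.pentagon a b c d e f g k l]; simp only [mul_assoc]) h).symm

theorem finsum_F_mul_F_mul_Fbar :
    ∑ᶠ k, TS.F a h d e g k * TS.F b c d k h l * TS.Fbar a b l e k f
      = TS.Fbar a b c g h f * TS.F f c d e g l :=
  finsum_mul_Fbar_of_eq_finsum_mul_F (X := fun f => TS.Fbar a b c g h f * TS.F f c d e g l)
    (fun _ hx => ⟨(N_eq_one_of_Fbar_ne_zero (left_ne_zero_of_mul hx)).1,
      (N_eq_one_of_F_ne_zero (right_ne_zero_of_mul hx)).2.2.1⟩)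
    (fun k => by rw [F_mul_F_eq_finsum_Fbar_mul_F_mul_F]; simp only [mul_assoc]) f

theorem finsum_Fbar_mul_Fbar_mul_F :
    ∑ᶠ g, TS.Fbar a h d e k g * (TS.Fbar a b c g h f * TS.F f c d e g l)
      = TS.Fbar a b l e k f * TS.F b c d k h l :=
  finsum_Fbar_mul_of_eq_finsum_F_mul (X := fun g => TS.Fbar a b c g h f * TS.F f c d e g l)
    (Z := fun k => TS.Fbar a b l e k f * TS.F b c d k h l)
    (fun _ hx => ⟨(N_eq_one_of_F_ne_zero (right_ne_zero_of_mul hx)).2.2.2,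
      (N_eq_one_of_Fbar_ne_zero (left_ne_zero_of_mul hx)).2.2.1⟩)
    (fun g => by rw [← finsum_F_mul_F_mul_Fbar]; exact finsum_congr fun k => by ring) k

theorem finsum_Fbar_mul_F_mul_F :
    ∑ᶠ g, TS.Fbar f c d e l g * TS.F a b c g f h * TS.F a h d e g k
      = TS.F a b l e f k * TS.Fbar b c d k l h := by
  simpa only [mul_assoc] using finsum_Fbar_mul_of_eq_finsum_F_mul
    (X := fun g => TS.F a b c g f h * TS.F a h d e g k)
    (Z := fun l => TS.F a b l e f k * TS.Fbar b c d k l h)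
    (fun _ hx => ⟨(N_eq_one_of_Fbar_ne_zero (right_ne_zero_of_mul hx)).2.1,
      (N_eq_one_of_F_ne_zero (left_ne_zero_of_mul hx)).2.2.2⟩)
    (fun g => by rw [F_mul_F_eq_finsum_F_mul_F_mul_Fbar]; simp only [mul_assoc]) l

theorem finsum_Fbar_Fbar_F_F_eq_finsum_Fbar_F_F_Fbar (f' l' : I) :
    ∑ᶠ g, TS.Fbar f c d e l g * TS.Fbar a b c g h f' * TS.F a b c g f h * TS.F f' c d e g l'
      = ∑ᶠ k, TS.Fbar b c d k l h * TS.F b c d k h l' * TS.F a b l e f k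
          * TS.Fbar a b l' e k f' := by
  calc ∑ᶠ g, TS.Fbar f c d e l g * TS.Fbar a b c g h f' * TS.F a b c g f h * TS.F f' c d e g l'
      = ∑ᶠ g, TS.Fbar f c d e l g * TS.F a b c g f h
          * (TS.Fbar a b c g h f' * TS.F f' c d e g l') := finsum_congr fun g => by ring
    _ = ∑ᶠ k, (∑ᶠ g, TS.Fbar f c d e l g * TS.F a b c g f h * TS.F a h d e g k)
          * ∑ᶠ g, TS.Fbar a h d e k g * (TS.Fbar a b c g h f' * TS.F f' c d e g l') :=
        (finsum_mul_F_mul_finsum_Fbar_mul fun _ hx =>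
          ⟨(N_eq_one_of_F_ne_zero (right_ne_zero_of_mul hx)).2.2.1,
            (N_eq_one_of_Fbar_ne_zero (left_ne_zero_of_mul hx)).2.2.2⟩).symm
    _ = ∑ᶠ k, TS.Fbar b c d k l h * TS.F b c d k h l' * TS.F a b l e f k
          * TS.Fbar a b l' e k f' := by
        simp only [finsum_Fbar_mul_F_mul_F, finsum_Fbar_mul_Fbar_mul_F]
        exact finsum_congr fun k => by ring

theorem finsum_F_moves_triple_product (f' l' m m' : I) :
    ∑ᶠ g, TS.Fbar f' c d e l' m' * TS.F f' c d e g l'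
        * (TS.Fbar a b c g h f' * TS.F a b c g f h * (TS.Fbar f c d e l g * TS.F f c d e m l))
      = ∑ᶠ k, TS.Fbar b c d k l h * TS.F b c d k h l' * TS.Fbar f' c d e l' m'
          * TS.F f c d e m l * TS.F a b l e f k * TS.Fbar a b l' e k f' := by
  set K := TS.Fbar f' c d e l' m' * TS.F f c d e m l
  calc _ = ∑ᶠ g, K * (TS.Fbar f c d e l g * TS.Fbar a b c g h f' * TS.F a b c g f h
          * TS.F f' c d e g l') := finsum_congr fun g => by ring
    _ = K * ∑ᶠ k, TS.Fbar b c d k l h * TS.F b c d k h l' * TS.F a b l e f k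
          * TS.Fbar a b l' e k f' := by
        rw [← mul_finsum' _ _ (hasFiniteSupport_of_N_eq_one fun _ hg =>
          (N_eq_one_of_Fbar_ne_zero (left_ne_zero_of_mul (left_ne_zero_of_mul
            (left_ne_zero_of_mul hg)))).1), finsum_Fbar_Fbar_F_F_eq_finsum_Fbar_F_F_Fbar]
    _ = _ := by
        rw [mul_finsum' _ _ (hasFiniteSupport_of_N_eq_one fun _ hk =>
          (N_eq_one_of_Fbar_ne_zero (left_ne_zero_of_mul (left_ne_zero_of_mul
            (left_ne_zero_of_mul hk)))).2.2.1)]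
        exact finsum_congr fun k => by ring

section Paths

variable {L : ℕ} {I0 : Set I} {lam : ℕ → I} {i : ℕ} {ν x y : I}
  {μ μ' : Fin (L + 1) → I}

open Function Fin

theorem IsPath.update (hμ : TS.IsPath L I0 lam μ) (hi : 1 ≤ i) (hiL : i + 1 ≤ L)
    (hx₁ : TS.N (μ ((i - 1 : ℕ) : Fin (L + 1))) (lam i) x = 1)
    (hx₂ : TS.N x (lam (i + 1)) (μ ((i + 1 : ℕ) : Fin (L + 1))) = 1) :
    TS.IsPath L I0 lam (update μ ((i : ℕ) : Fin (L + 1)) x) := by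
  have hne : ∀ j ≤ L, j ≠ i → ((j : ℕ) : Fin (L + 1)) ≠ ((i : ℕ) : Fin (L + 1)) :=
    fun j hj hji => natCast_ne_natCast hj (by omega) hji
  refine ⟨?_, fun j hj₁ hjL => ?_⟩
  · rw [update_of_ne (by simpa using hne 0 (Nat.zero_le L) (by omega))]
    exact hμ.1
  obtain rfl | rfl | ⟨hj, hj'⟩ : j = i ∨ j = i + 1 ∨ (j ≠ i ∧ j - 1 ≠ i) := by omega
  · rw [update_of_ne (hne _ (by omega) (by omega)), update_self]
    exact hx₁
  · rw [Nat.add_sub_cancel, update_self, update_of_ne (hne _ hjL (by omega))]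
    exact hx₂
  · rw [update_of_ne (hne _ (by omega) hj'), update_of_ne (hne _ hjL hj)]
    exact hμ.2 j hj₁ hjL

theorem eq_of_pMat_ne_zero (h : TS.pMat L lam i ν μ' μ ≠ 0) {j : Fin (L + 1)}
    (hj : j ≠ ((i : ℕ) : Fin (L + 1))) : μ j = μ' j := by
  have hprod := left_ne_zero_of_mul (left_ne_zero_of_mul h)
  rw [Finset.prod_boole] at hprod
  by_contra hne
  exact hprod (if_neg fun hall => hne (hall j (Finset.mem_erase.mpr ⟨hj, Finset.mem_univ j⟩)))

theorem pMat_update_left :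
    TS.pMat L lam i ν (update μ ((i : ℕ) : Fin (L + 1)) x) μ
      = TS.Fbar (μ ((i - 1 : ℕ) : Fin (L + 1))) (lam i) (lam (i + 1))
          (μ ((i + 1 : ℕ) : Fin (L + 1))) ν x
        * TS.F (μ ((i - 1 : ℕ) : Fin (L + 1))) (lam i) (lam (i + 1))
          (μ ((i + 1 : ℕ) : Fin (L + 1))) (μ ((i : ℕ) : Fin (L + 1))) ν := by
  rw [pMat, update_self, Finset.prod_eq_one fun j hj => by
    rw [update_of_ne (Finset.ne_of_mem_erase hj), if_pos rfl], one_mul]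

theorem pMat_update_right (hi : 1 ≤ i) (hiL : i + 1 ≤ L) :
    TS.pMat L lam i ν μ' (update μ' ((i : ℕ) : Fin (L + 1)) y)
      = TS.Fbar (μ' ((i - 1 : ℕ) : Fin (L + 1))) (lam i) (lam (i + 1))
          (μ' ((i + 1 : ℕ) : Fin (L + 1))) ν (μ' ((i : ℕ) : Fin (L + 1)))
        * TS.F (μ' ((i - 1 : ℕ) : Fin (L + 1))) (lam i) (lam (i + 1))
          (μ' ((i + 1 : ℕ) : Fin (L + 1))) y ν := by
  rw [pMat, update_self, update_of_ne (natCast_ne_natCast (by omega) (by omega) (by omega)),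
    update_of_ne (natCast_ne_natCast (by omega) (by omega) (by omega)),
    Finset.prod_eq_one fun j hj => by
      rw [update_of_ne (Finset.ne_of_mem_erase hj), if_pos rfl], one_mul]

theorem pMat_pred_update_update (hi : 2 ≤ i) (hiL : i ≤ L) :
    TS.pMat L lam (i - 1) ν (update μ' ((i : ℕ) : Fin (L + 1)) y)
        (update μ ((i : ℕ) : Fin (L + 1)) x)
      = (if x = y then 1 else 0)
        * (∏ j ∈ (Finset.univ.erase ((i - 1 : ℕ) : Fin (L + 1))).erase
              ((i : ℕ) : Fin (L + 1)), if μ j = μ' j then (1 : R) else 0)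
        * (TS.Fbar (μ ((i - 2 : ℕ) : Fin (L + 1))) (lam (i - 1)) (lam i) x ν
            (μ' ((i - 1 : ℕ) : Fin (L + 1)))
          * TS.F (μ ((i - 2 : ℕ) : Fin (L + 1))) (lam (i - 1)) (lam i) x
            (μ ((i - 1 : ℕ) : Fin (L + 1))) ν) := by
  have h_pred : ((i - 1 : ℕ) : Fin (L + 1)) ≠ ((i : ℕ) : Fin (L + 1)) :=
    natCast_ne_natCast (by omega) hiL (by omega)
  rw [pMat, Nat.sub_add_cancel (by omega : 1 ≤ i), Nat.sub_sub, update_self,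
    update_of_ne h_pred, update_of_ne h_pred,
    update_of_ne (natCast_ne_natCast (by omega) hiL (by omega)),
    ← Finset.mul_prod_erase _ _ (Finset.mem_erase.mpr ⟨h_pred.symm, Finset.mem_univ _⟩),
    update_self, update_self, Finset.prod_congr rfl fun j hj => by
      rw [update_of_ne (Finset.ne_of_mem_erase hj), update_of_ne (Finset.ne_of_mem_erase hj)]]
  ring

theorem mulMat_pMat_right (hμ : TS.IsPath L I0 lam μ) (hi : 1 ≤ i) (hiL : i + 1 ≤ L)
    (A : (Fin (L + 1) → I) → (Fin (L + 1) → I) → R) (μ' : Fin (L + 1) → I) :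
    TS.mulMat L I0 lam A (TS.pMat L lam i ν) μ' μ
      = ∑ᶠ x, A μ' (update μ ((i : ℕ) : Fin (L + 1)) x)
          * (TS.Fbar (μ ((i - 1 : ℕ) : Fin (L + 1))) (lam i) (lam (i + 1))
              (μ ((i + 1 : ℕ) : Fin (L + 1))) ν x
            * TS.F (μ ((i - 1 : ℕ) : Fin (L + 1))) (lam i) (lam (i + 1))
              (μ ((i + 1 : ℕ) : Fin (L + 1))) (μ ((i : ℕ) : Fin (L + 1))) ν) := by
  rw [mulMat, finsum_mem_eq_finsum_update _ μ
    (fun ρ hρ j hj => (eq_of_pMat_ne_zero (right_ne_zero_of_mul hρ) hj).symm)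
    (fun x hx => ?_)]
  · simp only [pMat_update_left]
  · rw [pMat_update_left] at hx
    obtain ⟨h₁, -, -, h₂⟩ :=
      N_eq_one_of_Fbar_ne_zero (left_ne_zero_of_mul (right_ne_zero_of_mul hx))
    exact hμ.update hi hiL h₁ h₂

theorem mulMat_pMat_left (hμ' : TS.IsPath L I0 lam μ') (hi : 1 ≤ i) (hiL : i + 1 ≤ L)
    (B : (Fin (L + 1) → I) → (Fin (L + 1) → I) → R) (μ : Fin (L + 1) → I) :
    TS.mulMat L I0 lam (TS.pMat L lam i ν) B μ' μ
      = ∑ᶠ y, TS.Fbar (μ' ((i - 1 : ℕ) : Fin (L + 1))) (lam i) (lam (i + 1))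
            (μ' ((i + 1 : ℕ) : Fin (L + 1))) ν (μ' ((i : ℕ) : Fin (L + 1)))
          * TS.F (μ' ((i - 1 : ℕ) : Fin (L + 1))) (lam i) (lam (i + 1))
            (μ' ((i + 1 : ℕ) : Fin (L + 1))) y ν
          * B (update μ' ((i : ℕ) : Fin (L + 1)) y) μ := by
  rw [mulMat, finsum_mem_eq_finsum_update _ μ'
    (fun ρ hρ j hj => eq_of_pMat_ne_zero (left_ne_zero_of_mul hρ) hj)
    (fun y hy => ?_)]
  · simp only [pMat_update_right hi hiL]
  · rw [pMat_update_right hi hiL] at hy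
    obtain ⟨h₁, -, -, h₂⟩ :=
      N_eq_one_of_F_ne_zero (right_ne_zero_of_mul (left_ne_zero_of_mul hy))
    exact hμ'.update hi hiL h₁ h₂

theorem mulMat_pMat_pred_pMat (hμ : TS.IsPath L I0 lam μ) (hi : 2 ≤ i) (hiL : i + 1 ≤ L)
    (ν₁ ν₂ : I) (μ' : Fin (L + 1) → I) (y : I) :
    TS.mulMat L I0 lam (TS.pMat L lam (i - 1) ν₂) (TS.pMat L lam i ν₁)
        (update μ' ((i : ℕ) : Fin (L + 1)) y) μ
      = (∏ j ∈ (Finset.univ.erase ((i - 1 : ℕ) : Fin (L + 1))).erase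
            ((i : ℕ) : Fin (L + 1)), if μ j = μ' j then (1 : R) else 0)
        * (TS.Fbar (μ ((i - 2 : ℕ) : Fin (L + 1))) (lam (i - 1)) (lam i) y ν₂
            (μ' ((i - 1 : ℕ) : Fin (L + 1)))
          * TS.F (μ ((i - 2 : ℕ) : Fin (L + 1))) (lam (i - 1)) (lam i) y
            (μ ((i - 1 : ℕ) : Fin (L + 1))) ν₂)
        * (TS.Fbar (μ ((i - 1 : ℕ) : Fin (L + 1))) (lam i) (lam (i + 1))
            (μ ((i + 1 : ℕ) : Fin (L + 1))) ν₁ y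
          * TS.F (μ ((i - 1 : ℕ) : Fin (L + 1))) (lam i) (lam (i + 1))
            (μ ((i + 1 : ℕ) : Fin (L + 1))) (μ ((i : ℕ) : Fin (L + 1))) ν₁) := by
  rw [mulMat_pMat_right hμ (by omega) hiL]
  simp only [pMat_pred_update_update hi (by omega : i ≤ L)]
  rw [finsum_eq_single _ y fun x hx => by simp [hx]]
  simp

end Paths

end TensorSystem

theorem triple_product_matrix_elements_down_general
    {R : Type*} [CommRing R] {I : Type*}
    (TS : TensorSystem R I) (L : ℕ) (I0 : Set I)
    (lam : ℕ → I) (ν₁ ν₂ ν₃ : I) (i : ℕ) (hi : 2 ≤ i) (hiL : i + 1 ≤ L)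
    (μ μ''' : Fin (L + 1) → I)
    (hμ : TS.IsPath L I0 lam μ) (hμ''' : TS.IsPath L I0 lam μ''') :
    TS.mulMat L I0 lam (TS.pMat L lam i ν₃)
      (TS.mulMat L I0 lam (TS.pMat L lam (i - 1) ν₂) (TS.pMat L lam i ν₁)) μ''' μ
    = ∑ᶠ υ : I,
      ((∏ j ∈ (Finset.univ.erase ((i - 1 : ℕ) : Fin (L + 1))).erase ((i : ℕ) : Fin (L + 1)),
          if μ j = μ''' j then (1 : R) else 0)
        * TS.Fbar (lam (i - 1)) (lam i) (lam (i + 1)) υ ν₁ ν₂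
        * TS.F (lam (i - 1)) (lam i) (lam (i + 1)) υ ν₂ ν₃
        * TS.Fbar (μ''' ((i - 1 : ℕ) : Fin (L + 1))) (lam i) (lam (i + 1)) (μ ((i + 1 : ℕ) : Fin (L + 1))) ν₃ (μ''' ((i : ℕ) : Fin (L + 1)))
        * TS.F (μ ((i - 1 : ℕ) : Fin (L + 1))) (lam i) (lam (i + 1)) (μ ((i + 1 : ℕ) : Fin (L + 1))) (μ ((i : ℕ) : Fin (L + 1))) ν₁
        * TS.F (μ ((i - 2 : ℕ) : Fin (L + 1))) (lam (i - 1)) ν₁ (μ ((i + 1 : ℕ) : Fin (L + 1))) (μ ((i - 1 : ℕ) : Fin (L + 1))) υ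
        * TS.Fbar (μ ((i - 2 : ℕ) : Fin (L + 1))) (lam (i - 1)) ν₃ (μ ((i + 1 : ℕ) : Fin (L + 1))) υ (μ''' ((i - 1 : ℕ) : Fin (L + 1)))) := by
  rw [TensorSystem.mulMat_pMat_left hμ''' (by omega) hiL]
  simp only [TensorSystem.mulMat_pMat_pred_pMat hμ hi hiL, Finset.prod_boole]
  by_cases hagree : ∀ j ∈ (Finset.univ.erase ((i - 1 : ℕ) : Fin (L + 1))).erase
      ((i : ℕ) : Fin (L + 1)), μ j = μ''' j
  · have h_next : μ''' ((i + 1 : ℕ) : Fin (L + 1)) = μ ((i + 1 : ℕ) : Fin (L + 1)) :=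
      (hagree _ (Finset.mem_erase.mpr ⟨Fin.natCast_ne_natCast hiL (by omega) (by omega),
        Finset.mem_erase.mpr ⟨Fin.natCast_ne_natCast hiL (by omega) (by omega),
          Finset.mem_univ _⟩⟩)).symm
    simp only [if_pos hagree, one_mul, h_next]
    exact TensorSystem.finsum_F_moves_triple_product _ _ _ _
  · simp only [if_neg hagree, zero_mul, mul_zero, finsum_zero]

/-- matrix elements of `p_i^{(ν₃)} p_{i-1}^{(ν₂)} p_i^{(ν₁)}`. -/
theorem triple_product_matrix_elements_down
    {R : Type*} [CommRing R] {I : Type*}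
    (TS : TensorSystem R I) (L : ℕ) (I0 : Set I) (hI0 : I0.Finite)
    (lam : ℕ → I) (ν₁ ν₂ ν₃ : I) (i : ℕ) (hi : 2 ≤ i) (hiL : i + 1 ≤ L)
    (μ μ''' : Fin (L + 1) → I)
    (hμ : TS.IsPath L I0 lam μ) (hμ''' : TS.IsPath L I0 lam μ''') :
    TS.mulMat L I0 lam (TS.pMat L lam i ν₃)
      (TS.mulMat L I0 lam (TS.pMat L lam (i - 1) ν₂) (TS.pMat L lam i ν₁)) μ''' μ
    = ∑ᶠ υ : I,
      ((∏ j ∈ (Finset.univ.erase ((i - 1 : ℕ) : Fin (L + 1))).erase ((i : ℕ) : Fin (L + 1)),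
          if μ j = μ''' j then (1 : R) else 0)
        * TS.Fbar (lam (i - 1)) (lam i) (lam (i + 1)) υ ν₁ ν₂
        * TS.F (lam (i - 1)) (lam i) (lam (i + 1)) υ ν₂ ν₃
        * TS.Fbar (μ''' ((i - 1 : ℕ) : Fin (L + 1))) (lam i) (lam (i + 1)) (μ ((i + 1 : ℕ) : Fin (L + 1))) ν₃ (μ''' ((i : ℕ) : Fin (L + 1)))
        * TS.F (μ ((i - 1 : ℕ) : Fin (L + 1))) (lam i) (lam (i + 1)) (μ ((i + 1 : ℕ) : Fin (L + 1))) (μ ((i : ℕ) : Fin (L + 1))) ν₁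
        * TS.F (μ ((i - 2 : ℕ) : Fin (L + 1))) (lam (i - 1)) ν₁ (μ ((i + 1 : ℕ) : Fin (L + 1))) (μ ((i - 1 : ℕ) : Fin (L + 1))) υ
        * TS.Fbar (μ ((i - 2 : ℕ) : Fin (L + 1))) (lam (i - 1)) ν₃ (μ ((i + 1 : ℕ) : Fin (L + 1))) υ (μ''' ((i - 1 : ℕ) : Fin (L + 1)))) :=
  triple_product_matrix_elements_down_general TS L I0 lam ν₁ ν₂ ν₃ i hi hiL μ μ''' hμ hμ'''
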